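/- Let Λ_0 = I (the d×d identity) and φ_1, ..., φ_t ∈ ℝ^d with ‖φ_τ‖ ≤ 1 for all τ, and Λ_t = I + ∑_{τ=1}^t φ_τ φ_τ^⊤. Then ∑_{τ=1}^t min{1, φ_τ^⊤ Λ_{τ-1}^{-1} φ_τ} ≤ 2 log(det Λ_t / det Λ_0) ≤ 2d log((d+t)/d). -/

import Mathlib

/-!
The matrix determinant lemma gives `det Λ (τ + 1) = det Λ τ * (1 + φ τ ⬝ᵥ (Λ τ)⁻¹ *ᵥ φ τ)`, so
`log det Λ t` telescopes to `∑ τ < t, log (1 + φ τ ⬝ᵥ (Λ τ)⁻¹ *ᵥ φ τ)`, and each term dominates half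
of `min 1 (φ τ ⬝ᵥ (Λ τ)⁻¹ *ᵥ φ τ)`. For the second bound, AM-GM on the eigenvalues of the
positive definite `Λ t` gives `det Λ t ≤ (trace (Λ t) / d) ^ d`, and
`trace (Λ t) = d + ∑ τ < t, ‖φ τ‖² ≤ d + t`.
-/

open Matrix

theorem Real.prod_le_sum_div_card_pow {ι : Type*} (s : Finset ι) {z : ι → ℝ}
    (hz : ∀ i ∈ s, 0 ≤ z i) : ∏ i ∈ s, z i ≤ ((∑ i ∈ s, z i) / s.card) ^ s.card := by
  rcases s.eq_empty_or_nonempty with rfl | hs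
  · simp
  have hcard : (0 : ℝ) < s.card := by exact_mod_cast hs.card_pos
  have hprod := Finset.prod_nonneg hz
  have hgm := Real.geom_mean_le_arith_mean s (fun _ => 1) z (fun _ _ => zero_le_one)
    (by simpa using hcard) hz
  simp only [Real.rpow_one, Finset.sum_const, nsmul_eq_mul, mul_one, one_mul] at hgm
  calc ∏ i ∈ s, z i = ((∏ i ∈ s, z i) ^ (s.card : ℝ)⁻¹) ^ s.card := by
        rw [← Real.rpow_natCast, ← Real.rpow_mul hprod, inv_mul_cancel₀ hcard.ne',
          Real.rpow_one]
    _ ≤ ((∑ i ∈ s, z i) / s.card) ^ s.card := by gcongr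

theorem Real.min_one_le_two_mul_log_one_add {x : ℝ} (hx : 0 ≤ x) :
    min 1 x ≤ 2 * Real.log (1 + x) := by
  have hlog : x / (1 + x) ≤ Real.log (1 + x) := by
    have := Real.one_sub_inv_le_log_of_pos (x := 1 + x) (by linarith)
    rwa [show 1 - (1 + x)⁻¹ = x / (1 + x) by field_simp; ring] at this
  have hmin : min 1 x ≤ 2 * (x / (1 + x)) := by
    rw [mul_div_assoc', le_div_iff₀ (by linarith)]
    rcases le_total x 1 with h | h
    · rw [min_eq_right h]; nlinarith
    · rw [min_eq_left h]; linarith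
  linarith

namespace Matrix

variable {n : Type*} [Fintype n] [DecidableEq n]

theorem det_add_vecMulVec {R : Type*} [CommRing R] {A : Matrix n n R} (hA : IsUnit A.det)
    (u v : n → R) : (A + vecMulVec u v).det = A.det * (1 + v ⬝ᵥ A⁻¹ *ᵥ u) := by
  rw [vecMulVec_eq Unit, det_add_replicateCol_mul_replicateRow hA, det_unique (n := Unit),
    Matrix.mul_assoc, ← replicateCol_mulVec, add_apply, one_apply_eq,
    replicateRow_mul_replicateCol_apply]

theorem PosSemidef.det_le_trace_div_card_pow {A : Matrix n n ℝ} (hA : A.PosSemidef) :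
    A.det ≤ (A.trace / Fintype.card n) ^ Fintype.card n := by
  have h := Real.prod_le_sum_div_card_pow Finset.univ fun i _ => hA.eigenvalues_nonneg i
  simpa [hA.isHermitian.det_eq_prod_eigenvalues, hA.isHermitian.trace_eq_sum_eigenvalues] using h

theorem posDef_one_add_sum_vecMulVec_self {ι : Type*} (s : Finset ι) (φ : ι → n → ℝ) :
    (1 + ∑ τ ∈ s, vecMulVec (φ τ) (φ τ)).PosDef :=
  PosDef.one.add_posSemidef <| posSemidef_sum s fun τ _ => by
    simpa using posSemidef_vecMulVec_self_star (φ τ)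

theorem log_det_one_add_sum_vecMulVec_self_le {ι : Type*} (s : Finset ι) {φ : ι → n → ℝ}
    (hφ : ∀ τ ∈ s, φ τ ⬝ᵥ φ τ ≤ 1) :
    Real.log (1 + ∑ τ ∈ s, vecMulVec (φ τ) (φ τ)).det ≤
      Fintype.card n * Real.log ((Fintype.card n + s.card) / Fintype.card n) := by
  set Λ := 1 + ∑ τ ∈ s, vecMulVec (φ τ) (φ τ)
  have hΛ := posDef_one_add_sum_vecMulVec_self s φ
  have htrace : Λ.trace ≤ Fintype.card n + s.card := by
    simpa [Λ, trace_sum] using Finset.sum_le_card_nsmul s _ 1 hφ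
  have htrace_nonneg : 0 ≤ Λ.trace := hΛ.posSemidef.trace_nonneg
  rw [← Real.log_pow]
  apply Real.log_le_log hΛ.det_pos
  calc Λ.det ≤ (Λ.trace / Fintype.card n) ^ Fintype.card n :=
        hΛ.posSemidef.det_le_trace_div_card_pow
    _ ≤ _ := by gcongr

theorem det_eq_prod_one_add_of_eq_one_add_sum_vecMulVec {φ : ℕ → n → ℝ}
    {Λ : ℕ → Matrix n n ℝ} (hΛ : ∀ s, Λ s = 1 + ∑ τ ∈ Finset.range s, vecMulVec (φ τ) (φ τ))
    (t : ℕ) :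
    (Λ t).det = ∏ τ ∈ Finset.range t, (1 + φ τ ⬝ᵥ (Λ τ)⁻¹ *ᵥ φ τ) := by
  induction t with
  | zero => simp [hΛ]
  | succ t ih =>
    have hstep : Λ (t + 1) = Λ t + vecMulVec (φ t) (φ t) := by
      rw [hΛ, hΛ, Finset.sum_range_succ, add_assoc]
    have hunit : IsUnit (Λ t).det := by
      rw [hΛ]; exact (posDef_one_add_sum_vecMulVec_self _ φ).isUnit.map detMonoidHom
    rw [hstep, det_add_vecMulVec hunit, ih, Finset.prod_range_succ]

end Matrix

theorem elliptical_potential_general (d t : ℕ) (φ : ℕ → (Fin d → ℝ))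
    (hφ : ∀ τ, Real.sqrt (∑ i, φ τ i ^ 2) ≤ 1)
    (Λ : ℕ → Matrix (Fin d) (Fin d) ℝ)
    (hΛ : ∀ s, Λ s = 1 + ∑ τ ∈ Finset.range s, Matrix.vecMulVec (φ τ) (φ τ)) :
    ∑ τ ∈ Finset.range t, min 1 (φ τ ⬝ᵥ ((Λ τ)⁻¹ *ᵥ φ τ)) ≤
      2 * Real.log ((Λ t).det / (Λ 0).det) ∧
    2 * Real.log ((Λ t).det / (Λ 0).det) ≤ 2 * d * Real.log ((d + t) / d) := by
  have hpos : ∀ s, (Λ s).PosDef := fun s => hΛ s ▸ posDef_one_add_sum_vecMulVec_self _ φ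
  have hquad : ∀ τ, 0 ≤ φ τ ⬝ᵥ (Λ τ)⁻¹ *ᵥ φ τ := fun τ => by
    simpa using (hpos τ).inv.posSemidef.dotProduct_mulVec_nonneg (φ τ)
  have hΛ0 : Λ 0 = 1 := by simp [hΛ]
  rw [hΛ0, det_one, div_one]
  constructor
  · rw [det_eq_prod_one_add_of_eq_one_add_sum_vecMulVec hΛ,
      Real.log_prod fun τ _ => by linarith [hquad τ], Finset.mul_sum]
    exact Finset.sum_le_sum fun τ _ => Real.min_one_le_two_mul_log_one_add (hquad τ)
  · have hnorm : ∀ τ ∈ Finset.range t, φ τ ⬝ᵥ φ τ ≤ 1 := fun τ _ => by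
      simpa [dotProduct, sq] using hφ τ
    have hlogdet := log_det_one_add_sum_vecMulVec_self_le (Finset.range t) hnorm
    simp only [Fintype.card_fin, Finset.card_range] at hlogdet
    rw [hΛ, mul_assoc]
    gcongr

theorem elliptical_potential (d t : ℕ) (hd : 0 < d) (φ : ℕ → (Fin d → ℝ))
    (hφ : ∀ τ, Real.sqrt (∑ i, φ τ i ^ 2) ≤ 1)
    (Λ : ℕ → Matrix (Fin d) (Fin d) ℝ)
    (hΛ : ∀ s, Λ s = 1 + ∑ τ ∈ Finset.range s, Matrix.vecMulVec (φ τ) (φ τ)) :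
    ∑ τ ∈ Finset.range t, min 1 (φ τ ⬝ᵥ ((Λ τ)⁻¹ *ᵥ φ τ)) ≤
      2 * Real.log ((Λ t).det / (Λ 0).det) ∧
    2 * Real.log ((Λ t).det / (Λ 0).det) ≤ 2 * d * Real.log ((d + t) / d) :=
  elliptical_potential_general d t φ hφ Λ hΛ
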